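/- arXiv:1111.6615 — 2 statements merged into one kernel-verified Lean document; each statement's English description precedes it below -/
import Mathlib

section
/- (Ramanujan's identity) Let a, b ∈ ℂ and let σ_a(n) = Σ_{d | n, d ≥ 1} d^a denote the complex divisor sum. Then for every s ∈ ℂ with Re(s) > max{1, Re(a)+1, Re(b)+1, Re(a+b)+1}, the series Σ_{n=1}^∞ σ_a(n) σ_b(n) n^{−s} converges absolutely and equals ζ(s) ζ(s−a) ζ(s−b) ζ(s−a−b) / ζ(2s−a−b). -/
/-!
The pointwise product `σ_a σ_b` factors as the Dirichlet convolution
`ζ * n ^ a * n ^ b * n ^ (a + b) * g`, where `g (d ^ 2) = μ d * d ^ (a + b)` and `g` vanishes off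
the squares; the L-series of the factors are `ζ(s)`, `ζ(s-a)`, `ζ(s-b)`, `ζ(s-a-b)` and
`1 / ζ(2s-a-b)`.

All these functions are multiplicative, so the factorization is checked at prime powers `p ^ n`.
With `x = p ^ a`, `y = p ^ b` and `G u = ∑_{i < u} x ^ i`, the convolution without `g` takes the
value `c n = ∑_{i + j = n} G (i + 1) y ^ j G (j + 1)` there, and for `n ≥ 2` convolving with `g`
subtracts `x y c (n - 2)`. Summing `G (i + 1) G (j + 1) - x G i G j = G (i + j + 1)` against `y ^ j`
over `i + j = n` gives `c n - x y c (n - 2) = G (n + 1) ∑_{j ≤ n} y ^ j = σ_a (p ^ n) σ_b (p ^ n)`.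
-/

open Complex

noncomputable section

/-- The complex divisor sum `σ_a(n) = ∑_{d ∣ n, d ≥ 1} d^a`. -/
def divisorSum (a : ℂ) (n : ℕ) : ℂ := ∑ d ∈ n.divisors, (d : ℂ) ^ a

open Finset

lemma sum_antidiagonal_pow_snd {R : Type*} [Semiring R] (x : R) (n : ℕ) :
    ∑ p ∈ antidiagonal n, x ^ p.2 = ∑ i ∈ range (n + 1), x ^ i := by
  rw [← Nat.sum_antidiagonal_swap]
  exact Nat.sum_antidiagonal_eq_sum_range_succ (fun i _ => x ^ i) n

section RamanujanSeq

variable {R : Type*} [CommRing R] (x y : R)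

lemma geom_sum_succ_mul_geom_sum_succ_sub (u v : ℕ) :
    (∑ i ∈ range (u + 1), x ^ i) * (∑ i ∈ range (v + 1), x ^ i) -
        x * (∑ i ∈ range u, x ^ i) * (∑ i ∈ range v, x ^ i) =
      ∑ i ∈ range (u + v + 1), x ^ i := by
  rw [geom_sum_succ (n := u), geom_sum_succ' (n := v), show u + v + 1 = v + (u + 1) by ring,
    sum_range_add]
  simp only [pow_add, ← mul_sum]
  rw [geom_sum_succ (n := u)]
  ring

/-- The value at `p ^ n` of `σ_a * n ^ b * n ^ (a + b)`, for `x = p ^ a` and `y = p ^ b`. -/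
def ramanujanSeq (n : ℕ) : R :=
  ∑ p ∈ antidiagonal n, (∑ i ∈ range (p.1 + 1), x ^ i) * (y ^ p.2 * ∑ i ∈ range (p.2 + 1), x ^ i)

lemma ramanujanSeq_one :
    ramanujanSeq x y 1 = (∑ i ∈ range 2, x ^ i) * ∑ i ∈ range 2, y ^ i := by
  simp only [ramanujanSeq, Nat.sum_antidiagonal_succ, HasAntidiagonal.antidiagonal_zero,
    sum_singleton, geom_sum_succ', range_one, range_zero, sum_empty, pow_zero, pow_one, add_zero,
    zero_add, one_mul, mul_one]
  ring

lemma sum_antidiagonal_add_two_eq_mul_ramanujanSeq (n : ℕ) :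
    ∑ p ∈ antidiagonal (n + 2),
        y ^ p.2 * (x * (∑ i ∈ range p.1, x ^ i) * ∑ i ∈ range p.2, x ^ i) =
      x * y * ramanujanSeq x y n := by
  rw [Finset.Nat.sum_antidiagonal_succ, Finset.Nat.sum_antidiagonal_succ']
  simp only [range_zero, sum_empty, mul_zero, zero_mul, zero_add]
  rw [ramanujanSeq, mul_sum]
  refine sum_congr rfl fun p _ => ?_
  ring

theorem geom_sum_mul_geom_sum_eq_ramanujanSeq_sub (n : ℕ) :
    (∑ i ∈ range (n + 3), x ^ i) * ∑ i ∈ range (n + 3), y ^ i =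
      ramanujanSeq x y (n + 2) - x * y * ramanujanSeq x y n := by
  rw [← sum_antidiagonal_add_two_eq_mul_ramanujanSeq x y, ramanujanSeq, ← sum_sub_distrib,
    ← sum_antidiagonal_pow_snd y, mul_sum]
  refine sum_congr rfl fun p hp => ?_
  rw [show n + 3 = p.1 + p.2 + 1 by have := mem_antidiagonal.mp hp; omega,
    ← geom_sum_succ_mul_geom_sum_succ_sub]
  ring

end RamanujanSeq

lemma Nat.Prime.isSquare_pow_iff {p : ℕ} (hp : p.Prime) {j : ℕ} : IsSquare (p ^ j) ↔ Even j := by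
  refine ⟨fun ⟨d, hd⟩ => ?_, fun hj => hj.isSquare_pow p⟩
  obtain ⟨t, -, rfl⟩ := (Nat.dvd_prime_pow hp).mp (Dvd.intro d hd.symm)
  rw [← pow_add] at hd
  exact ⟨t, Nat.pow_right_injective hp.two_le hd⟩

lemma Nat.Coprime.isSquare_mul_iff {m n : ℕ} (h : m.Coprime n) :
    IsSquare (m * n) ↔ IsSquare m ∧ IsSquare n := by
  refine ⟨fun ⟨r, hr⟩ => ?_, fun ⟨hm, hn⟩ => hm.mul hn⟩
  have hgcd : IsUnit (gcd m n) := by rw [h.gcd_eq_one]; exact isUnit_one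
  obtain ⟨d, hd⟩ := exists_eq_pow_of_mul_eq_pow hgcd (k := 2) (by rw [hr, sq])
  obtain ⟨e, he⟩ := exists_eq_pow_of_mul_eq_pow (gcd_comm m n ▸ hgcd) (k := 2)
    (by rw [mul_comm, hr, sq])
  exact ⟨⟨d, by rw [hd, sq]⟩, ⟨e, by rw [he, sq]⟩⟩

namespace ArithmeticFunction

open scoped ArithmeticFunction.zeta ArithmeticFunction.Moebius

lemma mul_apply_prime_pow {R : Type*} [Semiring R] (f g : ArithmeticFunction R) {p : ℕ}
    (hp : p.Prime) (n : ℕ) :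
    (f * g) (p ^ n) = ∑ q ∈ antidiagonal n, f (p ^ q.1) * g (p ^ q.2) := by
  rw [mul_apply, Nat.sum_divisorsAntidiagonal (fun x y => f x * g y),
    Nat.sum_divisors_prime_pow hp,
    Finset.Nat.sum_antidiagonal_eq_sum_range_succ (fun i j => f (p ^ i) * g (p ^ j))]
  refine sum_congr rfl fun i hi => ?_
  rw [Nat.pow_div (Nat.lt_succ_iff.mp (mem_range.mp hi)) hp.pos]

def natCpow (c : ℂ) : ArithmeticFunction ℂ :=
  ⟨fun n => if n = 0 then 0 else (n : ℂ) ^ c, if_pos rfl⟩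

lemma natCpow_apply (c : ℂ) {n : ℕ} (hn : n ≠ 0) : natCpow c n = (n : ℂ) ^ c := if_neg hn

lemma natCpow_mul (c : ℂ) (m n : ℕ) : natCpow c (m * n) = natCpow c m * natCpow c n := by
  rcases eq_or_ne m 0 with rfl | hm
  · simp [natCpow]
  rcases eq_or_ne n 0 with rfl | hn
  · simp [natCpow]
  rw [natCpow_apply c (mul_ne_zero hm hn), natCpow_apply c hm, natCpow_apply c hn, Nat.cast_mul,
    natCast_mul_natCast_cpow]

lemma natCpow_one (c : ℂ) : natCpow c 1 = 1 := by
  rw [natCpow_apply c one_ne_zero, Nat.cast_one, one_cpow]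

lemma natCpow_pow (c : ℂ) (n k : ℕ) : natCpow c (n ^ k) = natCpow c n ^ k := by
  induction k with
  | zero => exact natCpow_one c
  | succ k ih => rw [pow_succ, natCpow_mul, ih, pow_succ]

lemma natCpow_apply_pow (c : ℂ) {n : ℕ} (hn : n ≠ 0) (k : ℕ) :
    natCpow c (n ^ k) = ((n : ℂ) ^ c) ^ k := by
  rw [natCpow_pow, natCpow_apply c hn]

lemma isMultiplicative_natCpow (c : ℂ) : (natCpow c).IsMultiplicative :=
  ⟨natCpow_one c, fun {m n} _ => natCpow_mul c m n⟩

lemma natCpow_mul_natCpow_add_apply_prime_pow (a b : ℂ) {p : ℕ} (hp : p.Prime) (m : ℕ) :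
    (natCpow b * natCpow (a + b)) (p ^ m) =
      ((p : ℂ) ^ b) ^ m * ∑ i ∈ range (m + 1), ((p : ℂ) ^ a) ^ i := by
  rw [mul_apply_prime_pow _ _ hp, ← sum_antidiagonal_pow_snd, mul_sum]
  refine sum_congr rfl fun q hq => ?_
  rw [natCpow_apply_pow b hp.ne_zero, natCpow_apply_pow (a + b) hp.ne_zero,
    cpow_add _ _ (Nat.cast_ne_zero.mpr hp.ne_zero), ← mem_antidiagonal.mp hq]
  ring

def sigmaCpow (c : ℂ) : ArithmeticFunction ℂ := (ζ : ArithmeticFunction ℂ) * natCpow c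

lemma sigmaCpow_apply (c : ℂ) (n : ℕ) : sigmaCpow c n = divisorSum c n := by
  rw [sigmaCpow, coe_zeta_mul_apply, divisorSum]
  exact sum_congr rfl fun d hd => natCpow_apply c (Nat.ne_of_gt (Nat.pos_of_mem_divisors hd))

lemma isMultiplicative_sigmaCpow (c : ℂ) : (sigmaCpow c).IsMultiplicative :=
  isMultiplicative_zeta.natCast.mul (isMultiplicative_natCpow c)

lemma sigmaCpow_apply_prime_pow (c : ℂ) {p : ℕ} (hp : p.Prime) (k : ℕ) :
    sigmaCpow c (p ^ k) = ∑ i ∈ range (k + 1), ((p : ℂ) ^ c) ^ i := by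
  rw [sigmaCpow, coe_zeta_mul_apply, Nat.sum_divisors_prime_pow hp]
  exact sum_congr rfl fun i _ => natCpow_apply_pow c hp.ne_zero i

lemma sigmaCpow_mul_apply_prime_pow (a b : ℂ) {p : ℕ} (hp : p.Prime) (n : ℕ) :
    (sigmaCpow a * (natCpow b * natCpow (a + b))) (p ^ n) =
      ramanujanSeq ((p : ℂ) ^ a) ((p : ℂ) ^ b) n := by
  rw [mul_apply_prime_pow _ _ hp, ramanujanSeq]
  refine sum_congr rfl fun q _ => ?_
  rw [sigmaCpow_apply_prime_pow a hp, natCpow_mul_natCpow_add_apply_prime_pow a b hp]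

def onSquares {R : Type*} [Zero R] (f : ArithmeticFunction R) : ArithmeticFunction R :=
  ⟨fun n => if IsSquare n then f n.sqrt else 0, by simp⟩

section onSquares

variable {R : Type*}

lemma onSquares_apply_sq [Zero R] (f : ArithmeticFunction R) (d : ℕ) :
    onSquares f (d ^ 2) = f d := by
  simp [onSquares, Nat.sqrt_eq', IsSquare.sq]

lemma onSquares_apply_of_not_isSquare [Zero R] (f : ArithmeticFunction R) {n : ℕ}
    (hn : ¬IsSquare n) : onSquares f n = 0 := by
  simp [onSquares, hn]

lemma IsMultiplicative.onSquares [MonoidWithZero R] {f : ArithmeticFunction R}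
    (hf : f.IsMultiplicative) : (onSquares f).IsMultiplicative := by
  refine ⟨by simpa [hf.map_one] using onSquares_apply_sq f 1, fun {m n} hmn => ?_⟩
  by_cases hsq : IsSquare m ∧ IsSquare n
  · obtain ⟨⟨d, rfl⟩, ⟨e, rfl⟩⟩ := hsq
    simp only [← sq] at hmn ⊢
    rw [← mul_pow, onSquares_apply_sq, onSquares_apply_sq, onSquares_apply_sq,
      hf.map_mul_of_coprime ((Nat.coprime_pow_left_iff two_pos _ _).mp
        ((Nat.coprime_pow_right_iff two_pos _ _).mp hmn))]
  · rw [onSquares_apply_of_not_isSquare f (mt hmn.isSquare_mul_iff.mp hsq)]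
    rcases not_and_or.mp hsq with hm | hn
    · rw [onSquares_apply_of_not_isSquare f hm, zero_mul]
    · rw [onSquares_apply_of_not_isSquare f hn, mul_zero]

end onSquares

lemma onSquares_moebius_apply_prime_pow_eq_zero (c : ℂ) {p : ℕ} (hp : p.Prime) {j : ℕ}
    (hj0 : j ≠ 0) (hj2 : j ≠ 2) :
    onSquares ((μ : ArithmeticFunction ℂ).pmul (natCpow c)) (p ^ j) = 0 := by
  by_cases hj : Even j
  · obtain ⟨i, rfl⟩ := hj
    rw [← mul_two, pow_mul, onSquares_apply_sq, pmul_apply, intCoe_apply,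
      moebius_apply_prime_pow hp (by omega), if_neg (by omega), Int.cast_zero, zero_mul]
  · exact onSquares_apply_of_not_isSquare _ (mt hp.isSquare_pow_iff.mp hj)

lemma onSquares_moebius_apply_prime_sq (c : ℂ) {p : ℕ} (hp : p.Prime) :
    onSquares ((μ : ArithmeticFunction ℂ).pmul (natCpow c)) (p ^ 2) = -(p : ℂ) ^ c := by
  rw [onSquares_apply_sq, pmul_apply, intCoe_apply, moebius_apply_prime hp,
    natCpow_apply c hp.ne_zero, Int.cast_neg, Int.cast_one, neg_one_mul]

lemma mul_onSquares_moebius_apply_prime (F : ArithmeticFunction ℂ) (c : ℂ) {p : ℕ}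
    (hp : p.Prime) :
    (F * onSquares ((μ : ArithmeticFunction ℂ).pmul (natCpow c))) (p ^ 1) = F (p ^ 1) := by
  rw [mul_apply_prime_pow _ _ hp, sum_eq_single_of_mem (1, 0) (by simp)]
  · rw [pow_zero,
      (isMultiplicative_moebius.intCast.pmul (isMultiplicative_natCpow c)).onSquares.map_one,
      mul_one]
  · rintro ⟨i, j⟩ hij hne
    have hij := mem_antidiagonal.mp hij
    rw [onSquares_moebius_apply_prime_pow_eq_zero c hp (by grind) (by grind), mul_zero]

lemma mul_onSquares_moebius_apply_prime_pow_add_two (F : ArithmeticFunction ℂ) (c : ℂ) {p : ℕ}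
    (hp : p.Prime) (n : ℕ) :
    (F * onSquares ((μ : ArithmeticFunction ℂ).pmul (natCpow c))) (p ^ (n + 2)) =
      F (p ^ (n + 2)) - (p : ℂ) ^ c * F (p ^ n) := by
  rw [mul_apply_prime_pow _ _ hp,
    sum_eq_add_of_mem (n + 2, 0) (n, 2) (by simp) (by simp) (by simp)]
  · rw [pow_zero,
      (isMultiplicative_moebius.intCast.pmul (isMultiplicative_natCpow c)).onSquares.map_one,
      onSquares_moebius_apply_prime_sq c hp]
    ring
  · rintro ⟨i, j⟩ hij ⟨hne₁, hne₂⟩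
    have hij := mem_antidiagonal.mp hij
    rw [onSquares_moebius_apply_prime_pow_eq_zero c hp (by grind) (by grind), mul_zero]

theorem pmul_sigmaCpow_eq (a b : ℂ) :
    (sigmaCpow a).pmul (sigmaCpow b) =
      sigmaCpow a * (natCpow b * natCpow (a + b)) *
        onSquares ((μ : ArithmeticFunction ℂ).pmul (natCpow (a + b))) := by
  have hL := (isMultiplicative_sigmaCpow a).pmul (isMultiplicative_sigmaCpow b)
  have hR := ((isMultiplicative_sigmaCpow a).mul ((isMultiplicative_natCpow b).mul
    (isMultiplicative_natCpow (a + b)))).mul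
      (isMultiplicative_moebius.intCast.pmul (isMultiplicative_natCpow (a + b))).onSquares
  refine (IsMultiplicative.eq_iff_eq_on_prime_powers _ hL _ hR).mpr fun p k hp => ?_
  rw [pmul_apply, sigmaCpow_apply_prime_pow a hp, sigmaCpow_apply_prime_pow b hp]
  rcases k with _ | _ | n
  · simp [hR.map_one]
  · rw [mul_onSquares_moebius_apply_prime _ _ hp, sigmaCpow_mul_apply_prime_pow a b hp,
      ramanujanSeq_one]
  · rw [mul_onSquares_moebius_apply_prime_pow_add_two _ _ hp,
      sigmaCpow_mul_apply_prime_pow a b hp, sigmaCpow_mul_apply_prime_pow a b hp,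
      cpow_add _ _ (Nat.cast_ne_zero.mpr hp.ne_zero), geom_sum_mul_geom_sum_eq_ramanujanSeq_sub]

open LSeries
open scoped LSeries.notation

lemma term_pmul_natCpow (f : ArithmeticFunction ℂ) (c s : ℂ) (n : ℕ) :
    term ↗(f.pmul (natCpow c)) s n = term ↗f (s - c) n := by
  rcases eq_or_ne n 0 with rfl | hn
  · simp only [term_zero]
  rw [term_of_ne_zero hn, term_of_ne_zero hn, pmul_apply, natCpow_apply c hn,
    cpow_sub _ _ (Nat.cast_ne_zero.mpr hn), div_div_eq_mul_div]

lemma LSeriesSummable_pmul_natCpow_iff {f : ArithmeticFunction ℂ} {c s : ℂ} :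
    LSeriesSummable ↗(f.pmul (natCpow c)) s ↔ LSeriesSummable ↗f (s - c) :=
  Iff.of_eq (congrArg Summable (funext (term_pmul_natCpow f c s)))

lemma LSeries_pmul_natCpow (f : ArithmeticFunction ℂ) (c s : ℂ) :
    LSeries ↗(f.pmul (natCpow c)) s = LSeries ↗f (s - c) :=
  congrArg tsum (funext (term_pmul_natCpow f c s))

lemma LSeriesSummable_coe_zeta {s : ℂ} (hs : 1 < s.re) :
    LSeriesSummable ↗(ζ : ArithmeticFunction ℂ) s :=
  LSeriesSummable_zeta_iff.mpr hs

lemma LSeries_coe_zeta {s : ℂ} (hs : 1 < s.re) :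
    LSeries ↗(ζ : ArithmeticFunction ℂ) s = riemannZeta s :=
  LSeries_zeta_eq_riemannZeta hs

lemma coe_zeta_pmul_natCpow (c : ℂ) :
    (ζ : ArithmeticFunction ℂ).pmul (natCpow c) = natCpow c := by
  ext n
  rcases eq_or_ne n 0 with rfl | hn
  · simp
  · simp [natCpow_apply c hn]

lemma LSeriesSummable_natCpow {c s : ℂ} (h : c.re + 1 < s.re) :
    LSeriesSummable ↗(natCpow c) s := by
  rw [← coe_zeta_pmul_natCpow, LSeriesSummable_pmul_natCpow_iff]
  exact LSeriesSummable_coe_zeta (by rw [sub_re]; linarith)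

lemma LSeries_natCpow {c s : ℂ} (h : c.re + 1 < s.re) :
    LSeries ↗(natCpow c) s = riemannZeta (s - c) := by
  rw [← coe_zeta_pmul_natCpow, LSeries_pmul_natCpow]
  exact LSeries_coe_zeta (by rw [sub_re]; linarith)

lemma LSeriesSummable_sigmaCpow {c s : ℂ} (hs : 1 < s.re) (h : c.re + 1 < s.re) :
    LSeriesSummable ↗(sigmaCpow c) s :=
  LSeriesSummable_mul (LSeriesSummable_coe_zeta hs) (LSeriesSummable_natCpow h)

lemma LSeries_sigmaCpow {c s : ℂ} (hs : 1 < s.re) (h : c.re + 1 < s.re) :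
    LSeries ↗(sigmaCpow c) s = riemannZeta s * riemannZeta (s - c) := by
  rw [sigmaCpow, LSeries_mul' (LSeriesSummable_coe_zeta hs) (LSeriesSummable_natCpow h),
    LSeries_natCpow h, LSeries_coe_zeta hs]

lemma term_onSquares_sq (f : ArithmeticFunction ℂ) (s : ℂ) (d : ℕ) :
    term ↗(onSquares f) s (d ^ 2) = term ↗f (2 * s) d := by
  rcases eq_or_ne d 0 with rfl | hd
  · rw [zero_pow two_ne_zero, term_zero, term_zero]
  rw [term_of_ne_zero (pow_ne_zero 2 hd), term_of_ne_zero hd, onSquares_apply_sq, Nat.cast_pow,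
    ← natCast_cpow_natCast_mul, Nat.cast_ofNat]

lemma term_onSquares_eq_zero (f : ArithmeticFunction ℂ) (s : ℂ) {n : ℕ}
    (hn : n ∉ Set.range fun d : ℕ => d ^ 2) : term ↗(onSquares f) s n = 0 := by
  rcases eq_or_ne n 0 with rfl | hn0
  · exact term_zero _ _
  rw [term_of_ne_zero hn0,
    onSquares_apply_of_not_isSquare f fun ⟨r, hr⟩ => hn ⟨r, by rw [hr, ← sq]⟩, zero_div]

lemma LSeriesSummable_onSquares_iff {f : ArithmeticFunction ℂ} {s : ℂ} :
    LSeriesSummable ↗(onSquares f) s ↔ LSeriesSummable ↗f (2 * s) := by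
  rw [LSeriesSummable, ← (Nat.pow_left_injective two_ne_zero).summable_iff
    fun n => term_onSquares_eq_zero f s]
  exact Iff.of_eq (congrArg Summable (funext (term_onSquares_sq f s)))

lemma LSeries_onSquares (f : ArithmeticFunction ℂ) (s : ℂ) :
    LSeries ↗(onSquares f) s = LSeries ↗f (2 * s) := by
  rw [LSeries, ← (Nat.pow_left_injective two_ne_zero).tsum_eq
    (Function.support_subset_iff'.mpr fun n => term_onSquares_eq_zero f s)]
  exact congrArg tsum (funext (term_onSquares_sq f s))

lemma LSeriesSummable_onSquares_moebius {c s : ℂ} (h : 1 < (2 * s - c).re) :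
    LSeriesSummable ↗(onSquares ((μ : ArithmeticFunction ℂ).pmul (natCpow c))) s := by
  rw [LSeriesSummable_onSquares_iff, LSeriesSummable_pmul_natCpow_iff]
  simpa [intCoe_apply] using LSeriesSummable_moebius_iff.mpr h

lemma LSeries_onSquares_moebius {c s : ℂ} (h : 1 < (2 * s - c).re) :
    LSeries ↗(onSquares ((μ : ArithmeticFunction ℂ).pmul (natCpow c))) s =
      (riemannZeta (2 * s - c))⁻¹ := by
  rw [LSeries_onSquares, LSeries_pmul_natCpow, ← LSeries_one_eq_riemannZeta h]
  simpa [intCoe_apply] using eq_inv_of_mul_eq_one_right (LSeries_one_mul_Lseries_moebius h)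

theorem LSeriesHasSum_pmul_sigmaCpow {a b s : ℂ} (hs : 1 < s.re) (ha : a.re + 1 < s.re)
    (hb : b.re + 1 < s.re) (hab : (a + b).re + 1 < s.re) :
    LSeriesHasSum ↗((sigmaCpow a).pmul (sigmaCpow b)) s
      (riemannZeta s * riemannZeta (s - a) * riemannZeta (s - b) * riemannZeta (s - a - b) /
        riemannZeta (2 * s - a - b)) := by
  have h2s : 1 < (2 * s - (a + b)).re := by
    rw [add_re] at hab
    simp only [sub_re, mul_re, add_re, re_ofNat, im_ofNat, zero_mul, sub_zero]
    linarith
  have hσ := LSeriesSummable_sigmaCpow hs ha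
  have hN := LSeriesSummable_mul (LSeriesSummable_natCpow hb) (LSeriesSummable_natCpow hab)
  have hσN := LSeriesSummable_mul hσ hN
  have hM := LSeriesSummable_onSquares_moebius h2s
  rw [pmul_sigmaCpow_eq]
  convert (LSeriesSummable_mul hσN hM).LSeriesHasSum using 1
  rw [LSeries_mul' hσN hM, LSeries_mul' hσ hN,
    LSeries_mul' (LSeriesSummable_natCpow hb) (LSeriesSummable_natCpow hab),
    LSeries_sigmaCpow hs ha, LSeries_natCpow hb, LSeries_natCpow hab,
    LSeries_onSquares_moebius h2s, show s - (a + b) = s - a - b by ring,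
    show 2 * s - (a + b) = 2 * s - a - b by ring, div_eq_mul_inv]
  ring

end ArithmeticFunction

lemma LSeriesHasSum.hasSum_pnat {f : ℕ → ℂ} {s a : ℂ} (h : LSeriesHasSum f s a) :
    HasSum (fun n : ℕ+ => f n / (n : ℂ) ^ s) a := by
  have h' : HasSum (fun n : ℕ+ => LSeries.term f s n) a :=
    hasSum_pnat_iff.mpr (by rwa [LSeries.term_zero, add_zero])
  exact h'.congr_fun fun n => (LSeries.term_of_ne_zero n.ne_zero f s).symm

lemma LSeriesSummable.summable_norm_pnat {f : ℕ → ℂ} {s : ℂ} (h : LSeriesSummable f s) :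
    Summable fun n : ℕ+ => ‖f n / (n : ℂ) ^ s‖ := by
  refine (summable_pnat_iff_summable_nat.mpr (summable_norm_iff.mpr h)).congr fun n => ?_
  rw [LSeries.term_of_ne_zero n.ne_zero]

theorem ramanujan_identity (a b s : ℂ)
    (hs1 : 1 < s.re) (hsa : a.re + 1 < s.re) (hsb : b.re + 1 < s.re)
    (hsab : (a + b).re + 1 < s.re) :
    Summable (fun n : ℕ+ => ‖divisorSum a n * divisorSum b n / (n : ℂ) ^ s‖) ∧
    ∑' n : ℕ+, divisorSum a n * divisorSum b n / (n : ℂ) ^ s =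
      riemannZeta s * riemannZeta (s - a) * riemannZeta (s - b) *
        riemannZeta (s - a - b) / riemannZeta (2 * s - a - b) := by
  have h := ArithmeticFunction.LSeriesHasSum_pmul_sigmaCpow hs1 hsa hsb hsab
  simp only [ArithmeticFunction.pmul_apply, ArithmeticFunction.sigmaCpow_apply] at h
  exact ⟨h.LSeriesSummable.summable_norm_pnat, h.hasSum_pnat.tsum_eq⟩
end
end

section
/- Let (s_n) be a sequence of complex numbers, s_n = σ_n + i t_n with σ_n ≥ 1/2, and set λ_n = s_n(1 − s_n). Assume Re(λ_n) → ∞ and Im(λ_n)·log(Re λ_n)/√(Re λ_n) → 0 as n → ∞. Then |t_n| → ∞, the sequence (σ_n) is bounded, and (σ_n − 1/2)·log|t_n| → 0 as n → ∞. -/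
/-
Write `δ = σ - 1/2 ≥ 0` and `R = Re λ = t² - δ² + 1/4`, so that `|Im λ| = 2 |t| δ` and
`√R ≤ 2 |t|`. Hence `|Im λ| log R / √R ≥ δ log R ≥ 0`, and the hypothesis forces
`δ log R → 0`; since `log R → ∞`, also `δ → 0`. Once `δ ≤ 1/2` we have `|t| ≤ t² ≤ R`,
so `0 ≤ δ log |t| ≤ δ log R → 0`.
-/

open Filter Complex

noncomputable section

open Topology

theorem re_mul_one_sub_ofReal_add_mul_I (σ t : ℝ) :
    (((σ : ℂ) + t * I) * (1 - ((σ : ℂ) + t * I))).re = t ^ 2 - (σ - 1 / 2) ^ 2 + 1 / 4 := by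
  simp only [mul_re, sub_re, sub_im, add_re, add_im, ofReal_re, ofReal_im, mul_im,
    I_re, I_im, one_re, one_im]
  ring

theorem im_mul_one_sub_ofReal_add_mul_I (σ t : ℝ) :
    (((σ : ℂ) + t * I) * (1 - ((σ : ℂ) + t * I))).im = t * (1 - 2 * σ) := by
  simp only [mul_im, sub_re, sub_im, add_re, add_im, ofReal_re, ofReal_im, mul_re,
    I_re, I_im, one_re, one_im]
  ring

theorem sub_half_mul_log_le_abs {σ t R : ℝ} (hσ : 1 / 2 ≤ σ) (hR : 1 ≤ R)
    (hRt : R ≤ 4 * t ^ 2) :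
    (σ - 1 / 2) * Real.log R ≤ |t * (1 - 2 * σ) * Real.log R / √R| := by
  have hsqrt : 0 < √R := Real.sqrt_pos.2 (by linarith)
  have hsqrt_le : √R ≤ 2 * |t| :=
    Real.sqrt_le_iff.2 ⟨by positivity, by rwa [mul_pow, sq_abs, show (2 : ℝ) ^ 2 = 4 by norm_num]⟩
  have hlog : 0 ≤ Real.log R := Real.log_nonneg hR
  calc (σ - 1 / 2) * Real.log R
      ≤ (σ - 1 / 2) * Real.log R * (2 * |t| / √R) :=
        le_mul_of_one_le_right (by nlinarith) ((one_le_div hsqrt).2 hsqrt_le)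
    _ = |t * (1 - 2 * σ) * Real.log R / √R| := by
        rw [abs_div, abs_mul, abs_mul, abs_of_nonneg hlog, abs_of_pos hsqrt,
          abs_of_nonpos (by linarith : 1 - 2 * σ ≤ 0)]
        ring

theorem Filter.Tendsto.of_mul_of_tendsto_atTop {ι : Type*} {l : Filter ι} {x L : ι → ℝ}
    (h : Tendsto (fun i => x i * L i) l (𝓝 0)) (hL : Tendsto L l atTop) :
    Tendsto x l (𝓝 0) := by
  refine (h.div_atTop hL).congr' ?_
  filter_upwards [hL.eventually_gt_atTop 0] with i hi
  exact mul_div_cancel_right₀ _ hi.ne'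

theorem tendsto_abs_atTop_of_sq {ι : Type*} {l : Filter ι} {t : ι → ℝ}
    (h : Tendsto (fun i => t i ^ 2) l atTop) : Tendsto (fun i => |t i|) l atTop :=
  (Real.tendsto_sqrt_atTop.comp h).congr fun i => Real.sqrt_sq_eq_abs (t i)

theorem spectral_parameter_region
    (σ t : ℕ → ℝ) (hσ : ∀ n, 1 / 2 ≤ σ n)
    (lam : ℕ → ℂ)
    (hlam : ∀ n, lam n =
      (↑(σ n) + ↑(t n) * Complex.I) * (1 - (↑(σ n) + ↑(t n) * Complex.I)))
    (hre : Tendsto (fun n => (lam n).re) atTop atTop)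
    (him : Tendsto
      (fun n => (lam n).im * Real.log ((lam n).re) / Real.sqrt ((lam n).re))
      atTop (nhds 0)) :
    Tendsto (fun n => |t n|) atTop atTop ∧
    (∃ C : ℝ, ∀ n, σ n ≤ C) ∧
    Tendsto (fun n => (σ n - 1 / 2) * Real.log |t n|) atTop (nhds 0) := by
  have hR n : (lam n).re = t n ^ 2 - (σ n - 1 / 2) ^ 2 + 1 / 4 := by
    rw [hlam, re_mul_one_sub_ofReal_add_mul_I]
  have hI n : (lam n).im = t n * (1 - 2 * σ n) := by
    rw [hlam, im_mul_one_sub_ofReal_add_mul_I]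
  have ht : Tendsto (fun n => |t n|) atTop atTop :=
    tendsto_abs_atTop_of_sq <| tendsto_atTop_mono (fun n => by nlinarith [hR n])
      (tendsto_atTop_add_const_right _ (-(1 / 4)) hre)
  have hδlogR : Tendsto (fun n => (σ n - 1 / 2) * Real.log (lam n).re) atTop (𝓝 0) := by
    refine tendsto_of_tendsto_of_tendsto_of_le_of_le' tendsto_const_nhds
      (by simpa only [abs_zero] using him.abs) ?_ ?_
    all_goals filter_upwards [hre.eventually_ge_atTop 1, ht.eventually_ge_atTop 1] with n hRn htn
    · exact mul_nonneg (by linarith [hσ n]) (Real.log_nonneg hRn)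
    · rw [hI]
      exact sub_half_mul_log_le_abs (hσ n) hRn (by nlinarith [hR n, hσ n, sq_abs (t n)])
  have hδ : Tendsto (fun n => σ n - 1 / 2) atTop (𝓝 0) :=
    hδlogR.of_mul_of_tendsto_atTop (Real.tendsto_log_atTop.comp hre)
  obtain ⟨C, hC⟩ := (tendsto_sub_nhds_zero_iff.1 hδ).bddAbove_range
  refine ⟨ht, ⟨C, fun n => hC ⟨n, rfl⟩⟩, ?_⟩
  refine tendsto_of_tendsto_of_tendsto_of_le_of_le' tendsto_const_nhds hδlogR ?_ ?_
  all_goals filter_upwards [ht.eventually_ge_atTop 1,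
      hδ.eventually_le_const (by norm_num : (0 : ℝ) < 1 / 2)] with n htn hδn
  · exact mul_nonneg (by linarith [hσ n]) (Real.log_nonneg htn)
  · refine mul_le_mul_of_nonneg_left (Real.log_le_log (by linarith) ?_) (by linarith [hσ n])
    nlinarith [hR n, hσ n, sq_abs (t n)]
end
end
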